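/- arXiv:2309.01117 — 5 statements merged into one kernel-verified Lean document; each statement's English description precedes it below -/
import Mathlib

section
/- Summation-by-parts identity for the quadratic form of D: if l ≤ k in ℤ and f : ℤ → ℂ is supported in [l,k] = {x ∈ ℤ : l ≤ x ≤ k}, then ⟨Df, f⟩ = − Σ_{x=l}^{k} |√(μ(x+1))·f(x+1) − √(λ(x))·f(x)|² − μ(l)·|f(l)|². -/
/-- The difference operator `D` acting pointwise on functions `ℤ → ℂ`. -/
noncomputable def Dop (μ lam : ℤ → ℝ) (f : ℤ → ℂ) (x : ℤ) : ℂ :=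
  (Real.sqrt (μ (x + 1) * lam x) : ℂ) * f (x + 1)
    - ((μ x + lam x : ℝ) : ℂ) * f x
    + (Real.sqrt (μ x * lam (x - 1)) : ℂ) * f (x - 1)

/-!
Pointwise, `(Df)(x) · conj (f x)` is `-|grad x|²` plus the discrete divergence
`flux (x + 1) - flux x`. For finitely supported `f` the divergence sums to zero over `ℤ`, so
`⟨Df, f⟩ = -∑_{x ∈ ℤ} |grad x|²`. When `f` is supported in `[l, k]`, `grad` vanishes off
`[l - 1, k]`, and the extra term `grad (l - 1) = √μ(l) f(l)` is the boundary term `μ(l)|f(l)|²`.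
-/

open ComplexConjugate Function

theorem Summable.hasSum_comp_add_one_sub {α : Type*} [AddCommGroup α] [TopologicalSpace α]
    [IsTopologicalAddGroup α] {Φ : ℤ → α} (hΦ : Summable Φ) :
    HasSum (fun x ↦ Φ (x + 1) - Φ x) 0 := by
  have hshift : HasSum (fun x ↦ Φ (x + 1)) (∑' x, Φ x) :=
    (Equiv.addRight 1).hasSum_iff.mpr hΦ.hasSum
  simpa using hshift.sub hΦ.hasSum

namespace Dop

variable (μ lam : ℤ → ℝ) (f : ℤ → ℂ)

noncomputable def grad (x : ℤ) : ℂ :=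
  (Real.sqrt (μ (x + 1)) : ℂ) * f (x + 1) - (Real.sqrt (lam x) : ℂ) * f x

noncomputable def flux (x : ℤ) : ℂ :=
  (μ x : ℂ) * f x * conj (f x) - (Real.sqrt (μ x * lam (x - 1)) : ℂ) * f (x - 1) * conj (f x)

variable {μ lam f}

theorem hasFiniteSupport_flux (hf : f.HasFiniteSupport) : (flux μ lam f).HasFiniteSupport := by
  have hconj : (fun x ↦ conj (f x)).HasFiniteSupport := hf.fun_comp (map_zero _)
  unfold flux
  fun_prop

theorem hasFiniteSupport_grad (hf : f.HasFiniteSupport) : (grad μ lam f).HasFiniteSupport :=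
  ((hf.fun_comp_of_injective (add_left_injective 1)).fun_mul_right _).fun_sub
    (hf.fun_mul_right _)

theorem mul_conj_eq_flux_sub_norm_grad_sq (hμ : ∀ x, 0 ≤ μ x) (hlam : ∀ x, 0 ≤ lam x) (x : ℤ) :
    Dop μ lam f x * conj (f x)
      = flux μ lam f (x + 1) - flux μ lam f x - (‖grad μ lam f x‖ ^ 2 : ℝ) := by
  have hμ' : (Real.sqrt (μ (x + 1)) : ℂ) * Real.sqrt (μ (x + 1)) = μ (x + 1) := by
    exact_mod_cast Real.mul_self_sqrt (hμ _)
  have hlam' : (Real.sqrt (lam x) : ℂ) * Real.sqrt (lam x) = lam x := by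
    exact_mod_cast Real.mul_self_sqrt (hlam x)
  have hmix : (Real.sqrt (μ (x + 1)) : ℂ) * Real.sqrt (lam x) = Real.sqrt (μ (x + 1) * lam x) := by
    exact_mod_cast (Real.sqrt_mul (hμ _) _).symm
  rw [Complex.ofReal_pow, ← Complex.mul_conj']
  simp only [Dop, flux, grad, add_sub_cancel_right, map_sub, map_mul, Complex.conj_ofReal]
  push_cast
  linear_combination f (x + 1) * conj (f (x + 1)) * hμ' + f x * conj (f x) * hlam'
    - (f (x + 1) * conj (f x) + f x * conj (f (x + 1))) * hmix

theorem tsum_mul_conj_eq_neg_tsum_norm_grad_sq (hμ : ∀ x, 0 ≤ μ x) (hlam : ∀ x, 0 ≤ lam x)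
    (hf : f.HasFiniteSupport) :
    ∑' x, Dop μ lam f x * conj (f x) = -((∑' x, ‖grad μ lam f x‖ ^ 2 : ℝ) : ℂ) := by
  have hflux : Summable (flux μ lam f) := summable_of_hasFiniteSupport (hasFiniteSupport_flux hf)
  have hgrad : Summable fun x ↦ ((‖grad μ lam f x‖ ^ 2 : ℝ) : ℂ) :=
    summable_of_hasFiniteSupport <|
      (hasFiniteSupport_grad hf).fun_comp (g := fun z ↦ ((‖z‖ ^ 2 : ℝ) : ℂ)) (by simp)
  simp_rw [mul_conj_eq_flux_sub_norm_grad_sq hμ hlam]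
  rw [(hflux.hasSum_comp_add_one_sub.sub hgrad.hasSum).tsum_eq, zero_sub, Complex.ofReal_tsum]

theorem tsum_norm_grad_sq_of_support_subset_Icc (hμ : ∀ x, 0 ≤ μ x) {l k : ℤ}
    (hsupp : support f ⊆ Set.Icc l k) :
    ∑' x, ‖grad μ lam f x‖ ^ 2 = ∑ x ∈ Finset.Icc l k, ‖grad μ lam f x‖ ^ 2 + μ l * ‖f l‖ ^ 2 := by
  have hf : ∀ x, (x < l ∨ k < x) → f x = 0 := fun x hx ↦
    notMem_support.mp fun h ↦ by have := hsupp h; simp only [Set.mem_Icc] at this; omega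
  have hgrad : ∀ x ∉ insert (l - 1) (Finset.Icc l k), ‖grad μ lam f x‖ ^ 2 = 0 := by
    intro x hx
    simp only [Finset.mem_insert, Finset.mem_Icc] at hx
    simp [grad, hf x (by omega), hf (x + 1) (by omega)]
  have hleft : grad μ lam f (l - 1) = Real.sqrt (μ l) * f l := by
    simp [grad, hf (l - 1) (by omega)]
  rw [tsum_eq_sum hgrad, Finset.sum_insert (by simp), hleft, norm_mul, mul_pow,
    Complex.norm_real, Real.norm_eq_abs, sq_abs, Real.sq_sqrt (hμ l), add_comm]

end Dop

theorem Dop_summation_by_parts_general (μ lam : ℤ → ℝ) (hμ : ∀ x, 0 < μ x) (hlam : ∀ x, 0 < lam x)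
    (l k : ℤ) (f : ℤ → ℂ) (hsupp : Function.support f ⊆ Set.Icc l k) :
    ∑' x : ℤ, Dop μ lam f x * (starRingEnd ℂ) (f x)
      = -((∑ x ∈ Finset.Icc l k,
            ‖(Real.sqrt (μ (x + 1)) : ℂ) * f (x + 1) - (Real.sqrt (lam x) : ℂ) * f x‖ ^ 2 : ℝ) : ℂ)
        - ((μ l * ‖f l‖ ^ 2 : ℝ) : ℂ) := by
  have hf : f.HasFiniteSupport := (Set.finite_Icc l k).subset hsupp
  rw [Dop.tsum_mul_conj_eq_neg_tsum_norm_grad_sq (fun x ↦ (hμ x).le) (fun x ↦ (hlam x).le) hf,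
    Dop.tsum_norm_grad_sq_of_support_subset_Icc (fun x ↦ (hμ x).le) hsupp]
  push_cast [Dop.grad]
  ring

/-- Summation-by-parts identity for the quadratic form of `D`: if `f` is supported in
`[l,k]` then `⟨Df, f⟩ = −Σ_{x=l}^{k} |√(μ(x+1))·f(x+1) − √(λ(x))·f(x)|² − μ(l)·|f(l)|²`,
where `⟨f, g⟩ = Σ_x f(x)·conj(g(x))`. -/
theorem Dop_summation_by_parts (μ lam : ℤ → ℝ) (hμ : ∀ x, 0 < μ x) (hlam : ∀ x, 0 < lam x)
    (l k : ℤ) (hlk : l ≤ k) (f : ℤ → ℂ) (hsupp : Function.support f ⊆ Set.Icc l k) :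
    ∑' x : ℤ, Dop μ lam f x * (starRingEnd ℂ) (f x)
      = -((∑ x ∈ Finset.Icc l k,
            ‖(Real.sqrt (μ (x + 1)) : ℂ) * f (x + 1) - (Real.sqrt (lam x) : ℂ) * f x‖ ^ 2 : ℝ) : ℂ)
        - ((μ l * ‖f l‖ ^ 2 : ℝ) : ℂ) :=
  Dop_summation_by_parts_general μ lam hμ hlam l k f hsupp
end

section
/- A pair (z, z') of complex numbers is principal or complementary if and only if for every integer k ∈ ℤ the product (z + k)(z' + k) is a positive real number, i.e. Im((z+k)(z'+k)) = 0 and Re((z+k)(z'+k)) > 0. -/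
/-- A pair `(z, z')` of complex numbers is principal (`z ∉ ℝ` and `z' = conj z`) or
complementary (`z, z' ∈ ℝ` with `k < z, z' < k+1` for some integer `k`) if and only if
`(z + k)(z' + k)` is a positive real number for every integer `k`. -/
theorem principal_or_complementary_iff (z z' : ℂ) :
    ((z.im ≠ 0 ∧ z' = (starRingEnd ℂ) z) ∨
      (z.im = 0 ∧ z'.im = 0 ∧
        ∃ k : ℤ, (k : ℝ) < z.re ∧ z.re < k + 1 ∧ (k : ℝ) < z'.re ∧ z'.re < k + 1)) ↔
    ∀ k : ℤ, ((z + (k : ℂ)) * (z' + (k : ℂ))).im = 0 ∧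
      0 < ((z + (k : ℂ)) * (z' + (k : ℂ))).re := by
  constructor
  · rintro (⟨him, rfl⟩ | ⟨hz, hz', k0, h1, h2, h3, h4⟩) k
    · simp only [Complex.mul_im, Complex.mul_re, Complex.add_re, Complex.add_im,
        Complex.conj_re, Complex.conj_im, Complex.intCast_re, Complex.intCast_im]
      constructor
      · ring
      · nlinarith [mul_self_pos.mpr him, sq_nonneg (z.re + k)]
    · simp only [Complex.mul_im, Complex.mul_re, Complex.add_re, Complex.add_im,
        Complex.intCast_re, Complex.intCast_im, hz, hz']
      constructor
      · ring
      · rcases le_or_gt 0 ((k0 : ℝ) + k) with h | h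
        · have hz1 : 0 < z.re + k := by linarith
          have hz2 : 0 < z'.re + k := by linarith
          nlinarith
        · have hk : (k0 : ℝ) + k ≤ -1 := by
            have hint : k0 + k < 0 := by exact_mod_cast h
            have h2' : ((k0 + k : ℤ) : ℝ) ≤ ((-1 : ℤ) : ℝ) :=
              Int.cast_le.mpr (by omega)
            push_cast at h2'
            linarith
          have hz1 : z.re + k < 0 := by linarith
          have hz2 : z'.re + k < 0 := by linarith
          nlinarith
  · intro h
    have him : ∀ k : ℤ, (z.re + k) * z'.im + z.im * (z'.re + k) = 0 := by
      intro k
      have := (h k).1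
      simpa [Complex.mul_im, Complex.add_re, Complex.add_im,
        Complex.intCast_re, Complex.intCast_im] using this
    have hre : ∀ k : ℤ, 0 < (z.re + k) * (z'.re + k) - z.im * z'.im := by
      intro k
      have := (h k).2
      simpa [Complex.mul_re, Complex.add_re, Complex.add_im,
        Complex.intCast_re, Complex.intCast_im] using this
    have h0 := him 0
    have h1 := him 1
    push_cast at h0 h1
    have hsum : z'.im = -z.im := by linarith
    by_cases hz : z.im = 0
    · right
      have hz' : z'.im = 0 := by rw [hsum, hz, neg_zero]
      refine ⟨hz, hz', ⌊z.re⌋, ?_, ?_, ?_, ?_⟩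
      · rcases lt_or_eq_of_le (Int.floor_le z.re) with h | h
        · exact h
        · exfalso
          have := hre (-⌊z.re⌋)
          rw [hz, hz'] at this
          push_cast at this
          have h0' : z.re + -(⌊z.re⌋ : ℝ) = 0 := by linarith [h]
          rw [h0'] at this
          nlinarith [this]
      · exact Int.lt_floor_add_one z.re
      · have hp := hre (-⌊z.re⌋)
        rw [hz, hz'] at hp
        push_cast at hp
        have hfl : (⌊z.re⌋ : ℝ) ≤ z.re := Int.floor_le z.re
        nlinarith
      · have hp := hre (-(⌊z.re⌋ + 1))
        rw [hz, hz'] at hp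
        push_cast at hp
        have hfl : z.re < ⌊z.re⌋ + 1 := Int.lt_floor_add_one z.re
        nlinarith
    · left
      refine ⟨hz, ?_⟩
      have hre' : z'.re = z.re := by
        have : z.im * (z'.re - z.re) = 0 := by rw [hsum] at h0; ring_nf; ring_nf at h0; linarith
        rcases mul_eq_zero.mp this with h | h
        · exact absurd h hz
        · linarith
      apply Complex.ext
      · simpa using hre'
      · simpa using hsum
end

section
/- If (z, z') is a principal or complementary pair of complex numbers, then for every partition λ the number (z)_λ · (z')_λ := ∏_{i=1}^{l} ∏_{j=1}^{λ_i} (z + j − i)(z' + j − i) (where l is the length of λ) is a positive real number. Consequently z·z' > 0 and the z-measure weight M_{z,z',ξ}(λ) = (1−ξ)^{zz'} ξ^{|λ|} (z)_λ (z')_λ (dim λ/|λ|!)² is strictly positive for every λ and every ξ ∈ (0,1). -/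
/-!
Positivity is read in the partial order on `ℂ` where `0 < w` means that `w` is a positive real.
Each factor `(z + m)(z' + m)` with `m ∈ ℤ` is positive: for a principal pair it is `|z + m|²`
with `z + m ∉ ℝ`; for a complementary pair `z + m` and `z' + m` are reals in the same open
interval `(n, n + 1)`, which does not contain `0`, so they have the same sign. The weight is
then a product of positive reals.
-/

/-- The product `(z)_λ · (z')_λ = ∏_{i=1}^{l} ∏_{j=1}^{λ_i} (z + j − i)(z' + j − i)`,
written with 0-based indices: rows `i ∈ {0,…,L−1}`, boxes `j ∈ {0,…,λ_i−1}`. -/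
noncomputable def pochProd (z z' : ℂ) (L : ℕ) (lam : ℕ → ℕ) : ℂ :=
  ∏ i ∈ Finset.range L, ∏ j ∈ Finset.range (lam i),
    ((z + (j : ℂ) - (i : ℂ)) * (z' + (j : ℂ) - (i : ℂ)))

open scoped ComplexOrder

theorem mul_pos_of_mem_Ioo_intCast {x y : ℝ} {n : ℤ} (hx : x ∈ Set.Ioo (n : ℝ) (n + 1))
    (hy : y ∈ Set.Ioo (n : ℝ) (n + 1)) : 0 < x * y := by
  rcases le_or_gt 0 n with hn | hn
  · have hn' : (0 : ℝ) ≤ n := by exact_mod_cast hn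
    exact mul_pos (by linarith [hx.1]) (by linarith [hy.1])
  · have hn' : (n : ℝ) + 1 ≤ 0 := by exact_mod_cast Int.add_one_le_iff.2 hn
    exact mul_pos_of_neg_of_neg (by linarith [hx.2]) (by linarith [hy.2])

def IsPrincipalPair (z z' : ℂ) : Prop :=
  z.im ≠ 0 ∧ z' = starRingEnd ℂ z

def IsComplementaryPair (z z' : ℂ) : Prop :=
  z.im = 0 ∧ z'.im = 0 ∧
    ∃ k : ℤ, (k : ℝ) < z.re ∧ z.re < k + 1 ∧ (k : ℝ) < z'.re ∧ z'.re < k + 1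

def IsPrincipalOrComplementaryPair (z z' : ℂ) : Prop :=
  IsPrincipalPair z z' ∨ IsComplementaryPair z z'

variable {z z' : ℂ}

theorem IsPrincipalPair.mul_add_ofReal_pos (h : IsPrincipalPair z z') (r : ℝ) :
    0 < (z + r) * (z' + r) := by
  obtain ⟨him, rfl⟩ := h
  have hne : z + r ≠ 0 := fun h0 => him (by simpa using congrArg Complex.im h0)
  rw [show starRingEnd ℂ z + r = starRingEnd ℂ (z + r) by simp, Complex.mul_conj]
  exact Complex.zero_lt_real.2 (Complex.normSq_pos.2 hne)

theorem IsComplementaryPair.mul_add_intCast_pos (h : IsComplementaryPair z z') (m : ℤ) :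
    0 < (z + m) * (z' + m) := by
  obtain ⟨hz, hz', k, hkz, hzk, hkz', hz'k⟩ := h
  have hreal : (z + m) * (z' + m) = (((z.re + m) * (z'.re + m) : ℝ) : ℂ) := by
    apply Complex.ext <;> simp [hz, hz']
  rw [hreal, Complex.zero_lt_real]
  apply mul_pos_of_mem_Ioo_intCast (n := k + m) <;> constructor <;> push_cast <;> linarith

theorem IsPrincipalOrComplementaryPair.mul_add_intCast_pos
    (h : IsPrincipalOrComplementaryPair z z') (m : ℤ) :
    0 < (z + m) * (z' + m) :=
  h.elim (fun hp => by exact_mod_cast hp.mul_add_ofReal_pos m) (·.mul_add_intCast_pos m)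

theorem IsPrincipalOrComplementaryPair.pochProd_pos
    (h : IsPrincipalOrComplementaryPair z z') (L : ℕ) (lam : ℕ → ℕ) :
    0 < pochProd z z' L lam :=
  Finset.prod_pos fun i _ => Finset.prod_pos fun j _ => by
    convert h.mul_add_intCast_pos ((j : ℤ) - i) using 2 <;> push_cast <;> ring

theorem zMeasure_weight_pos_general (z z' : ℂ)
    (hzz : (z.im ≠ 0 ∧ z' = (starRingEnd ℂ) z) ∨
      (z.im = 0 ∧ z'.im = 0 ∧
        ∃ k : ℤ, (k : ℝ) < z.re ∧ z.re < k + 1 ∧ (k : ℝ) < z'.re ∧ z'.re < k + 1))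
    (L : ℕ) (lam : ℕ → ℕ) :
    (pochProd z z' L lam).im = 0 ∧ 0 < (pochProd z z' L lam).re ∧
    (z * z').im = 0 ∧ 0 < (z * z').re ∧
    ∀ ξ : ℝ, 0 < ξ → ξ < 1 → ∀ d : ℕ, 0 < d →
      0 < Real.rpow (1 - ξ) ((z * z').re) * ξ ^ (∑ i ∈ Finset.range L, lam i)
        * (pochProd z z' L lam).re
        * ((d : ℝ) / (Nat.factorial (∑ i ∈ Finset.range L, lam i))) ^ 2 := by
  have hadm : IsPrincipalOrComplementaryPair z z' := hzz
  obtain ⟨hpoch_re, hpoch_im⟩ := Complex.pos_iff.1 (hadm.pochProd_pos L lam)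
  obtain ⟨hzz_re, hzz_im⟩ := Complex.pos_iff.1 (by simpa using hadm.mul_add_intCast_pos 0)
  refine ⟨hpoch_im.symm, hpoch_re, hzz_im.symm, hzz_re, fun ξ hξ0 hξ1 d hd => ?_⟩
  have hrpow : 0 < Real.rpow (1 - ξ) (z * z').re := Real.rpow_pos_of_pos (by linarith) _
  positivity

/-- If `(z, z')` is a principal or complementary pair, then for every partition `λ`
(weakly decreasing, vanishing from index `L` on) the number `(z)_λ·(z')_λ` is a positive
real; consequently `z·z' > 0` and the `z`-measure weight
`(1−ξ)^{zz'}·ξ^{|λ|}·(z)_λ(z')_λ·(dim λ/|λ|!)²` is strictly positive for every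
`ξ ∈ (0,1)` (here `d = dim λ`, a positive integer). -/
theorem zMeasure_weight_pos (z z' : ℂ)
    (hzz : (z.im ≠ 0 ∧ z' = (starRingEnd ℂ) z) ∨
      (z.im = 0 ∧ z'.im = 0 ∧
        ∃ k : ℤ, (k : ℝ) < z.re ∧ z.re < k + 1 ∧ (k : ℝ) < z'.re ∧ z'.re < k + 1))
    (L : ℕ) (lam : ℕ → ℕ) (hanti : Antitone lam) (hsupp : ∀ i, L ≤ i → lam i = 0) :
    (pochProd z z' L lam).im = 0 ∧ 0 < (pochProd z z' L lam).re ∧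
    (z * z').im = 0 ∧ 0 < (z * z').re ∧
    ∀ ξ : ℝ, 0 < ξ → ξ < 1 → ∀ d : ℕ, 0 < d →
      0 < Real.rpow (1 - ξ) ((z * z').re) * ξ ^ (∑ i ∈ Finset.range L, lam i)
        * (pochProd z z' L lam).re
        * ((d : ℝ) / (Nat.factorial (∑ i ∈ Finset.range L, lam i))) ^ 2 :=
  zMeasure_weight_pos_general z z' hzz L lam
end

section
/- For any partition λ of length ≤ N with Frobenius coordinates (α_1, …, α_d | β_1, …, β_d), one has Σ_{i=1}^{d} ((α_i + 1/2)² − (β_i + 1/2)²) = Σ_{i=1}^{N} ((λ_i − i + 1/2)² − (−i + 1/2)²). -/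
/-!
Both sides equal twice the total content `∑ (j - i)` of the Young diagram of `λ`. On the right
this is computed row by row. On the left, the diagram is cut into the `d` diagonal hooks
`{(i, j) : min i j = m}`: the arm of hook `m` has contents `0, 1, …, α_m` and its leg
`-1, …, -β_m`, so it contributes `α_m(α_m + 1) - β_m(β_m + 1) = (α_m + 1/2)² - (β_m + 1/2)²`.
-/

open Finset

/-- The conjugate partition: `λ'_j = #{i ∈ {1,…,N} : λ_i ≥ j}` (0-based `j`). -/
def conjPart (N : ℕ) (lam : ℕ → ℕ) (j : ℕ) : ℕ :=
  ((Finset.range N).filter (fun i => j + 1 ≤ lam i)).card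

/-- The Frobenius depth `d = #{i : λ_i ≥ i}` (1-based), i.e. the number of diagonal boxes. -/
def frobDepth (N : ℕ) (lam : ℕ → ℕ) : ℕ :=
  ((Finset.range N).filter (fun i => i + 1 ≤ lam i)).card

lemma lt_card_filter_range_iff {p : ℕ → Prop} [DecidablePred p]
    (hp : ∀ i j, i ≤ j → p j → p i) (N i : ℕ) :
    i < ((range N).filter p).card ↔ i < N ∧ p i := by
  constructor
  · intro hi
    by_contra! h
    have hsub : (range N).filter p ⊆ range i := fun k hk => by
      rw [mem_filter, mem_range] at hk
      rw [mem_range]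
      by_contra! hik
      exact h (by omega) (hp i k hik hk.2)
    simpa using (card_le_card hsub).trans_lt' hi
  · rintro ⟨hiN, hpi⟩
    have hsub : range (i + 1) ⊆ (range N).filter p := fun k hk => by
      rw [mem_range] at hk
      exact mem_filter.2 ⟨mem_range.2 (by omega), hp k i (by omega) hpi⟩
    simpa using card_le_card hsub

section Partition

variable {N : ℕ} {lam : ℕ → ℕ}

lemma lt_conjPart_iff (hanti : Antitone lam) (m i : ℕ) :
    i < conjPart N lam m ↔ i < N ∧ m < lam i :=
  lt_card_filter_range_iff (fun _ _ hij hj => le_trans hj (hanti hij)) N i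

lemma lt_frobDepth_iff (hanti : Antitone lam) (i : ℕ) :
    i < frobDepth N lam ↔ i < N ∧ i < lam i :=
  lt_card_filter_range_iff (fun _ _ hij hj => by have := hanti hij; omega) N i

variable (N lam) in
def cells : Finset (ℕ × ℕ) :=
  (range N).biUnion fun i => {i} ×ˢ range (lam i)

lemma mem_cells {c : ℕ × ℕ} : c ∈ cells N lam ↔ c.1 < N ∧ c.2 < lam c.1 := by
  obtain ⟨i, j⟩ := c
  simp [cells]

lemma sum_cells (f : ℕ × ℕ → ℝ) :
    ∑ c ∈ cells N lam, f c = ∑ i ∈ range N, ∑ j ∈ range (lam i), f (i, j) :=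
  sum_finset_product _ _ _ fun _ => by rw [mem_cells, mem_range, mem_range]

lemma min_mem_range_frobDepth (hanti : Antitone lam) {c : ℕ × ℕ} (hc : c ∈ cells N lam) :
    min c.1 c.2 ∈ range (frobDepth N lam) := by
  rw [mem_cells] at hc
  have := hanti (min_le_left c.1 c.2)
  rw [mem_range, lt_frobDepth_iff hanti]
  omega

lemma filter_min_cells_eq (hanti : Antitone lam) {m : ℕ} (hm : m < N) :
    (cells N lam).filter (fun c => min c.1 c.2 = m)
      = {m} ×ˢ Ico m (lam m) ∪ Ico (m + 1) (conjPart N lam m) ×ˢ {m} := by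
  ext ⟨i, j⟩
  simp only [mem_filter, mem_cells, mem_union, mem_product, mem_singleton, mem_Ico,
    lt_conjPart_iff hanti]
  constructor
  · rintro ⟨⟨hi, hj⟩, hmin⟩
    rcases le_or_gt i j with hij | hji
    · obtain rfl : i = m := (min_eq_left hij).symm.trans hmin
      exact Or.inl ⟨rfl, hij, hj⟩
    · obtain rfl : j = m := (min_eq_right hji.le).symm.trans hmin
      exact Or.inr ⟨⟨hji, hi, hj⟩, rfl⟩
  · rintro (⟨rfl, hmj, hj⟩ | ⟨⟨hmi, hi, hmlam⟩, rfl⟩)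
    · exact ⟨⟨hm, hj⟩, min_eq_left hmj⟩
    · exact ⟨⟨hi, hmlam⟩, by omega⟩

end Partition

lemma sum_range_two_mul (n : ℕ) : ∑ k ∈ range n, 2 * (k : ℝ) = (n : ℝ) ^ 2 - n := by
  induction n with
  | zero => simp
  | succ n ih => rw [sum_range_succ, ih]; push_cast; ring

lemma sum_Ico_arm (m l : ℕ) :
    ∑ j ∈ Ico m l, 2 * ((j : ℝ) - m) = (((l - (m + 1) : ℕ) : ℝ) + 1 / 2) ^ 2 - 1 / 4 := by
  rcases le_or_gt l m with hlm | hml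
  · rw [Ico_eq_empty_of_le hlm, Nat.sub_eq_zero_of_le (by omega)]
    norm_num
  · obtain ⟨a, rfl⟩ := Nat.exists_eq_add_of_lt hml
    rw [sum_Ico_eq_sum_range, show m + a + 1 - m = a + 1 by omega,
      show m + a + 1 - (m + 1) = a by omega]
    simp only [Nat.cast_add, add_sub_cancel_left]
    rw [sum_range_two_mul]
    push_cast
    ring

lemma sum_Ico_leg (m l : ℕ) :
    ∑ i ∈ Ico (m + 1) l, 2 * ((m : ℝ) - i) = 1 / 4 - (((l - (m + 1) : ℕ) : ℝ) + 1 / 2) ^ 2 := by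
  rw [sum_Ico_eq_sum_range]
  have hterm : ∀ k ∈ range (l - (m + 1)), 2 * ((m : ℝ) - ↑(m + 1 + k)) = -(2 * (k : ℝ)) - 2 :=
    fun k _ => by push_cast; ring
  rw [sum_congr rfl hterm, sum_sub_distrib, sum_neg_distrib, sum_range_two_mul]
  simp only [sum_const, card_range, nsmul_eq_mul]
  ring

lemma sum_hook (m l l' : ℕ) :
    ∑ c ∈ {m} ×ˢ Ico m l ∪ Ico (m + 1) l' ×ˢ {m}, 2 * ((c.2 : ℝ) - c.1)
      = (((l - (m + 1) : ℕ) : ℝ) + 1 / 2) ^ 2 - (((l' - (m + 1) : ℕ) : ℝ) + 1 / 2) ^ 2 := by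
  have hdisj : Disjoint ({m} ×ˢ Ico m l) (Ico (m + 1) l' ×ˢ {m}) := by
    rw [disjoint_left]
    simp only [mem_product, mem_singleton, mem_Ico]
    omega
  rw [sum_union hdisj, sum_product, sum_product_right, sum_singleton, sum_singleton,
    sum_Ico_arm, sum_Ico_leg]
  ring

lemma sum_row (i l : ℕ) :
    ∑ j ∈ range l, 2 * ((j : ℝ) - i)
      = ((l : ℝ) - ((i : ℝ) + 1) + 1 / 2) ^ 2 - (-((i : ℝ) + 1) + 1 / 2) ^ 2 := by
  induction l with
  | zero => simp
  | succ l ih => rw [sum_range_succ, ih]; push_cast; ring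

theorem frobenius_squares_identity_general (N : ℕ) (lam : ℕ → ℕ)
    (hanti : Antitone lam) :
    ∑ i ∈ Finset.range (frobDepth N lam),
        ((((lam i - (i + 1) : ℕ) : ℝ) + 1 / 2) ^ 2
          - (((conjPart N lam i - (i + 1) : ℕ) : ℝ) + 1 / 2) ^ 2)
      = ∑ i ∈ Finset.range N,
          (((lam i : ℝ) - ((i : ℝ) + 1) + 1 / 2) ^ 2 - (-((i : ℝ) + 1) + 1 / 2) ^ 2) := by
  calc _ = ∑ m ∈ range (frobDepth N lam),
          ∑ c ∈ (cells N lam).filter (fun c => min c.1 c.2 = m), 2 * ((c.2 : ℝ) - c.1) := by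
        refine sum_congr rfl fun m hm => ?_
        have hmN := ((lt_frobDepth_iff hanti m).1 (mem_range.1 hm)).1
        rw [filter_min_cells_eq hanti hmN, sum_hook]
    _ = ∑ c ∈ cells N lam, 2 * ((c.2 : ℝ) - c.1) :=
        sum_fiberwise_of_maps_to (fun _ hc => min_mem_range_frobDepth hanti hc) _
    _ = _ := by
        rw [sum_cells]
        exact sum_congr rfl fun i _ => sum_row i (lam i)

/-- For a partition `λ` of length ≤ N with Frobenius coordinates `(α|β)` one has
`Σ_{i=1}^{d} ((α_i + 1/2)² − (β_i + 1/2)²) = Σ_{i=1}^{N} ((λ_i − i + 1/2)² − (−i + 1/2)²)`.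
All indices below are 0-based: `α_i = λ_i − (i+1)`, `β_i = λ'_i − (i+1)` for `i < d`,
and on the right the 1-based row index `i` becomes `i+1`. -/
theorem frobenius_squares_identity (N : ℕ) (lam : ℕ → ℕ)
    (hanti : Antitone lam) (hsupp : ∀ i, N ≤ i → lam i = 0) :
    ∑ i ∈ Finset.range (frobDepth N lam),
        ((((lam i - (i + 1) : ℕ) : ℝ) + 1 / 2) ^ 2
          - (((conjPart N lam i - (i + 1) : ℕ) : ℝ) + 1 / 2) ^ 2)
      = ∑ i ∈ Finset.range N,
          (((lam i : ℝ) - ((i : ℝ) + 1) + 1 / 2) ^ 2 - (-((i : ℝ) + 1) + 1 / 2) ^ 2) :=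
  frobenius_squares_identity_general N lam hanti
end

section
/- Weighted infinite Cauchy–Binet identity: let N ≥ 1, let c : ℕ → ℝ with c_l ≥ 0, let p : ℕ → (ℤ → ℝ), and let x, y : Fin N → ℤ. Assume that Σ_{l∈ℕ} c_l·|p_l(x_i)|·|p_l(y_j)| < ∞ for all i, j. Then the family, indexed by strictly decreasing tuples l_1 > l_2 > ⋯ > l_N ≥ 0 of natural numbers, of the numbers (∏_{i=1}^{N} c_{l_i}) · det[p_{l_i}(x_j)]_{i,j=1}^{N} · det[p_{l_i}(y_j)]_{i,j=1}^{N} is summable, and its sum equals det[Σ_{l∈ℕ} c_l · p_l(x_i) · p_l(y_j)]_{i,j=1}^{N}. -/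
/-!
Expanding `det[∑_t A_t(i) B_t(j)]` by the Leibniz formula and multiplying out the absolutely
convergent series turns it into the sum, over all tuples `l`, of `det[A_{l_i}(j)] · ∏_i B_{l_i}(i)`.
Tuples with a repeated entry contribute `0`, and every injective tuple is uniquely `s ∘ σ` with `s`
strictly decreasing and `σ` a permutation; summing over `σ` first reassembles `det[B_{s_i}(j)]`.
For the weighted identity take `A_t(i) = c_t p_t(x_i)` and `B_t(j) = p_t(y_j)`.
-/

open Finset Matrix Equiv

section ProdOfSeries

variable {R β : Type*} [NormedCommRing R]

lemma prod_consEquiv_apply {n : ℕ} (f : Fin (n + 1) → β → R) (q : β × (Fin n → β)) :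
    ∏ i, f i (Fin.consEquiv (fun _ => β) q i) = f 0 q.1 * ∏ i, f i.succ (q.2 i) := by
  simp [Fin.consEquiv, Fin.prod_univ_succ]

lemma summable_norm_prod_apply {n : ℕ} (f : Fin n → β → R) (hf : ∀ i, Summable fun t => ‖f i t‖) :
    Summable fun l : Fin n → β => ‖∏ i, f i (l i)‖ := by
  induction n with
  | zero => exact .of_finite
  | succ n ih =>
    rw [← (Fin.consEquiv fun _ => β).summable_iff]
    simpa only [Function.comp_def, prod_consEquiv_apply] using
      (hf 0).mul_norm (ih (fun i => f i.succ) fun i => hf i.succ)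

lemma hasSum_prod_apply [CompleteSpace R] {n : ℕ} (f : Fin n → β → R)
    (hf : ∀ i, Summable fun t => ‖f i t‖) :
    HasSum (fun l : Fin n → β => ∏ i, f i (l i)) (∏ i, ∑' t, f i t) := by
  induction n with
  | zero => simp
  | succ n ih =>
    rw [← (Fin.consEquiv fun _ => β).hasSum_iff, Fin.prod_univ_succ]
    simpa only [Function.comp_def, prod_consEquiv_apply] using
      (hf 0).of_norm.hasSum.mul (ih (fun i => f i.succ) fun i => hf i.succ)
        ((hf 0).mul_norm (summable_norm_prod_apply (fun i => f i.succ) fun i => hf i.succ)).of_norm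

end ProdOfSeries

section Sorting

variable {β : Type*} [LinearOrder β] {n : ℕ}

lemma exists_strictAnti_comp_perm {l : Fin n → β} (hl : Function.Injective l) :
    ∃ (s : Fin n → β) (σ : Perm (Fin n)), StrictAnti s ∧ s ∘ σ = l := by
  set τ : Perm (Fin n) := Fin.revPerm.trans (Tuple.sort l)
  have hsort : StrictMono (l ∘ Tuple.sort l) :=
    (Tuple.monotone_sort l).strictMono_of_injective (hl.comp (Tuple.sort l).injective)
  refine ⟨l ∘ τ, τ⁻¹, hsort.comp_strictAnti Fin.rev_strictAnti, ?_⟩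
  ext i
  simp

lemma injective_strictAnti_comp_perm :
    Function.Injective fun q : {s : Fin n → β // StrictAnti s} × Perm (Fin n) => q.1.1 ∘ q.2 := by
  rintro ⟨⟨s, hs⟩, σ⟩ ⟨⟨s', hs'⟩, σ'⟩ h
  have hrange : Set.range s = Set.range s' := by
    rw [← σ.surjective.range_comp s, ← σ'.surjective.range_comp s']
    exact congrArg Set.range h
  obtain rfl : s = s' := (hs.range_inj hs').1 hrange
  obtain rfl : σ = σ' := Equiv.ext fun i => hs.injective (congrFun h i)
  rfl

end Sorting

section CauchyBinet

variable {R β : Type*} {n : ℕ}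

lemma det_rows_eq_zero_of_not_injective [CommRing R] (A : β → Fin n → R) {l : Fin n → β}
    (hl : ¬Function.Injective l) : det (of fun i j => A (l i) j) = 0 := by
  obtain ⟨i, i', hii', hne⟩ := Function.not_injective_iff.1 hl
  exact det_zero_of_row_eq hne (funext fun j => by simp [hii'])

lemma sum_perm_det_mul_prod [CommRing R] (A B : β → Fin n → R) (s : Fin n → β) :
    ∑ σ : Perm (Fin n), det (of fun i j => A (s (σ i)) j) * ∏ i, B (s (σ i)) i
      = det (of fun i j => A (s i) j) * det (of fun i j => B (s i) j) := by
  simp_rw [det_apply (of fun i j => B (s i) j), mul_sum]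
  refine sum_congr rfl fun σ _ => ?_
  rw [show det (of fun i j => A (s (σ i)) j) = Perm.sign σ * det (of fun i j => A (s i) j) from
    det_permute σ (of fun i j => A (s i) j), Units.smul_def, zsmul_eq_mul]
  simp only [of_apply]
  ring

lemma hasSum_det_mul_prod [NormedCommRing R] [CompleteSpace R] (A B : β → Fin n → R)
    (h : ∀ i j, Summable fun t => ‖A t i * B t j‖) :
    HasSum (fun l : Fin n → β => det (of fun i j => A (l i) j) * ∏ i, B (l i) i)
      (det (of fun i j => ∑' t, A t i * B t j)) := by
  have hσ (σ : Perm (Fin n)) :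
      HasSum (fun l : Fin n → β => Perm.sign σ • ∏ i, A (l i) (σ i) * B (l i) i)
        (Perm.sign σ • ∏ i, ∑' t, A t (σ i) * B t i) :=
    (hasSum_prod_apply (fun i t => A t (σ i) * B t i) fun i => h (σ i) i).const_smul _
  have hexpand (l : Fin n → β) : det (of fun i j => A (l i) j) * ∏ i, B (l i) i
      = ∑ σ : Perm (Fin n), Perm.sign σ • ∏ i, A (l i) (σ i) * B (l i) i := by
    rw [← det_transpose, det_apply, sum_mul]
    simp only [transpose_apply, of_apply, smul_mul_assoc, prod_mul_distrib]
  simp only [hexpand]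
  rw [det_apply]
  exact hasSum_sum fun σ _ => hσ σ

theorem hasSum_det_mul_det [NormedCommRing R] [CompleteSpace R] [LinearOrder β]
    (A B : β → Fin n → R) (h : ∀ i j, Summable fun t => ‖A t i * B t j‖) :
    HasSum (fun s : {s : Fin n → β // StrictAnti s} =>
        det (of fun i j => A (s.1 i) j) * det (of fun i j => B (s.1 i) j))
      (det (of fun i j => ∑' t, A t i * B t j)) := by
  have hsupp :
      ∀ l ∉ Set.range fun q : {s : Fin n → β // StrictAnti s} × Perm (Fin n) => q.1.1 ∘ q.2,
        det (of fun i j => A (l i) j) * ∏ i, B (l i) i = 0 := by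
    intro l hl
    refine mul_eq_zero_of_left (det_rows_eq_zero_of_not_injective A fun hinj => hl ?_) _
    obtain ⟨s, σ, hs, rfl⟩ := exists_strictAnti_comp_perm hinj
    exact ⟨(⟨s, hs⟩, σ), rfl⟩
  have hpairs := (injective_strictAnti_comp_perm.hasSum_iff hsupp).2 (hasSum_det_mul_prod A B h)
  refine hpairs.prod_fiberwise fun s => ?_
  rw [← sum_perm_det_mul_prod]
  exact hasSum_fintype _

end CauchyBinet

theorem weighted_cauchy_binet_general (N : ℕ) (c : ℕ → ℝ)
    (p : ℕ → ℤ → ℝ) (x y : Fin N → ℤ)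
    (hsum : ∀ i j : Fin N, Summable fun l : ℕ => c l * |p l (x i)| * |p l (y j)|) :
    Summable (fun l : {l : Fin N → ℕ // StrictAnti l} =>
      (∏ i, c (l.1 i)) * Matrix.det (Matrix.of fun i j => p (l.1 i) (x j))
        * Matrix.det (Matrix.of fun i j => p (l.1 i) (y j))) ∧
    ∑' l : {l : Fin N → ℕ // StrictAnti l},
        (∏ i, c (l.1 i)) * Matrix.det (Matrix.of fun i j => p (l.1 i) (x j))
          * Matrix.det (Matrix.of fun i j => p (l.1 i) (y j))
      = Matrix.det (Matrix.of fun i j => ∑' t : ℕ, c t * p t (x i) * p t (y j)) := by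
  have habs (i j : Fin N) : Summable fun t => ‖c t * p t (x i) * p t (y j)‖ := by
    simpa [abs_mul] using (hsum i j).abs
  have h := hasSum_det_mul_det (fun t i => c t * p t (x i)) (fun t j => p t (y j)) habs
  have hcol (s : Fin N → ℕ) : det (of fun i j => c (s i) * p (s i) (x j))
      = (∏ i, c (s i)) * det (of fun i j => p (s i) (x j)) :=
    det_mul_column (fun i => c (s i)) (of fun i j => p (s i) (x j))
  simp only [hcol] at h
  exact ⟨h.summable, h.tsum_eq⟩

/-- Weighted infinite Cauchy–Binet identity: for nonnegative weights `c : ℕ → ℝ`,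
functions `p : ℕ → (ℤ → ℝ)` and points `x, y : Fin N → ℤ` with
`Σ_l c_l·|p_l(x_i)|·|p_l(y_j)| < ∞` for all `i, j`, the family
`(∏_i c_{l_i})·det[p_{l_i}(x_j)]·det[p_{l_i}(y_j)]`, indexed by strictly decreasing
tuples `l₁ > ⋯ > l_N ≥ 0`, is summable with sum `det[Σ_l c_l p_l(x_i) p_l(y_j)]`. -/
theorem weighted_cauchy_binet (N : ℕ) (hN : 1 ≤ N) (c : ℕ → ℝ) (hc : ∀ l, 0 ≤ c l)
    (p : ℕ → ℤ → ℝ) (x y : Fin N → ℤ)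
    (hsum : ∀ i j : Fin N, Summable fun l : ℕ => c l * |p l (x i)| * |p l (y j)|) :
    Summable (fun l : {l : Fin N → ℕ // StrictAnti l} =>
      (∏ i, c (l.1 i)) * Matrix.det (Matrix.of fun i j => p (l.1 i) (x j))
        * Matrix.det (Matrix.of fun i j => p (l.1 i) (y j))) ∧
    ∑' l : {l : Fin N → ℕ // StrictAnti l},
        (∏ i, c (l.1 i)) * Matrix.det (Matrix.of fun i j => p (l.1 i) (x j))
          * Matrix.det (Matrix.of fun i j => p (l.1 i) (y j))
      = Matrix.det (Matrix.of fun i j => ∑' t : ℕ, c t * p t (x i) * p t (y j)) :=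
  weighted_cauchy_binet_general N c p x y hsum
end
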